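/- arXiv:1905.13366 — 2 statements merged into one kernel-verified Lean document; each statement's English description precedes it below -/
import Mathlib

section
/- Let ε ∈ (0, 1/(10n²)). Then there do not exist n+1 vectors ν₁, …, ν_{n+1} in ℝⁿ such that |⟨ν_i, ν_j⟩| ≤ ε for all i ≠ j and ||ν_i| − 1| ≤ ε for all i. -/
/-!
If the Gram matrix of a family of vectors is strictly diagonally dominant, it is nonsingular by
Gershgorin's circle theorem, so the family is linearly independent. For `n + 1` almost orthonormal
vectors in `ℝⁿ` each off-diagonal row sum of the Gram matrix is at most `n ε`, which is smaller than
`(1 - ε)² ≤ ‖νᵢ‖²`; this would give `n + 1` linearly independent vectors in `ℝⁿ`.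
-/

open RealInnerProductSpace

theorem linearIndependent_of_sum_norm_inner_lt {𝕜 E ι : Type*} [RCLike 𝕜] [NormedAddCommGroup E]
    [InnerProductSpace 𝕜 E] [Fintype ι] [DecidableEq ι] {v : ι → E}
    (h : ∀ i, ∑ j ∈ Finset.univ.erase i, ‖inner 𝕜 (v i) (v j)‖ < ‖v i‖ ^ 2) :
    LinearIndependent 𝕜 v := by
  refine Matrix.linearIndependent_of_det_gram_ne_zero (det_ne_zero_of_sum_row_lt_diag ?_)
  simpa only [Matrix.gram_apply, inner_self_eq_norm_sq_to_K, norm_pow, RCLike.norm_ofReal,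
    abs_norm] using h

theorem natCast_mul_lt_one_sub_sq_of_lt_one_div_ten_mul_sq {n : ℕ} {ε : ℝ}
    (hε : ε < 1 / (10 * (n : ℝ) ^ 2)) : ε < 1 ∧ n * ε < (1 - ε) ^ 2 := by
  rcases n.eq_zero_or_pos with rfl | hn
  · norm_num at hε
    constructor <;> nlinarith
  · have hn1 : (1 : ℝ) ≤ n := by exact_mod_cast hn
    have h10 : 10 * (n : ℝ) ^ 2 * ε < 1 := by rwa [lt_div_iff₀ (by positivity), mul_comm] at hε
    constructor <;> nlinarith

theorem no_n_plus_one_almost_orthonormal_vectors_general (n : ℕ) (ε : ℝ)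
    (hε : ε < 1 / (10 * (n : ℝ) ^ 2)) :
    ¬ ∃ ν : Fin (n + 1) → EuclideanSpace ℝ (Fin n),
        (∀ i j : Fin (n + 1), i ≠ j → abs (inner ℝ (ν i) (ν j) : ℝ) ≤ ε) ∧
        (∀ i : Fin (n + 1), |‖ν i‖ - 1| ≤ ε) := by
  rintro ⟨ν, horth, hunit⟩
  obtain ⟨hε1, hnε⟩ := natCast_mul_lt_one_sub_sq_of_lt_one_div_ten_mul_sq hε
  have hoff : ∀ i, ∑ j ∈ Finset.univ.erase i, ‖inner ℝ (ν i) (ν j)‖ ≤ n * ε := fun i => by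
    have := Finset.sum_le_card_nsmul (Finset.univ.erase i) _ ε
      fun j hj => horth i j (Finset.ne_of_mem_erase hj).symm
    simpa [Finset.card_erase_of_mem] using this
  have hdiag : ∀ i, (1 - ε) ^ 2 ≤ ‖ν i‖ ^ 2 := fun i =>
    pow_le_pow_left₀ (by linarith) (by linarith [(abs_le.mp (hunit i)).1]) 2
  have hind : LinearIndependent ℝ ν :=
    linearIndependent_of_sum_norm_inner_lt fun i => ((hoff i).trans_lt hnε).trans_le (hdiag i)
  simpa using hind.fintype_card_le_finrank

/-- If `0 < ε < 1/(10 n²)`, there do not exist `n+1` vectors in `ℝⁿ`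
which are pairwise almost orthogonal (`|⟨νᵢ, νⱼ⟩| ≤ ε` for `i ≠ j`) and almost unit
(`||νᵢ| − 1| ≤ ε`). -/
theorem no_n_plus_one_almost_orthonormal_vectors (n : ℕ) (ε : ℝ)
    (hε0 : 0 < ε) (hε : ε < 1 / (10 * (n : ℝ) ^ 2)) :
    ¬ ∃ ν : Fin (n + 1) → EuclideanSpace ℝ (Fin n),
        (∀ i j : Fin (n + 1), i ≠ j → abs (inner ℝ (ν i) (ν j) : ℝ) ≤ ε) ∧
        (∀ i : Fin (n + 1), |‖ν i‖ - 1| ≤ ε) :=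
  no_n_plus_one_almost_orthonormal_vectors_general n ε hε
end

section
/- Existence of almost middle points from a Gromov–Hausdorff approximation: Let 0 ≤ k ≤ n, 0 < δ < 1/3, and suppose Φ: B_{10r}(0, q̂) → B_{10r}(q) is a pointed (δr)-Gromov–Hausdorff approximation, where B_{10r}(0, q̂) ⊂ ℝᵏ × X_k for a metric space X_k and B_{10r}(q) is a geodesic ball in a complete Riemannian manifold M. Then for any q̂₁⁺, q̂₁⁻ ∈ B_r(q̂) ⊂ X_k there exists q̂₀ ∈ B_{3r}(q̂) with |d(q̂₀, q̂₁⁺) − ½d(q̂₁⁺, q̂₁⁻)| ≤ 8√δ·r and |d(q̂₀, q̂₁⁻) − ½d(q̂₁⁺, q̂₁⁻)| ≤ 8√δ·r. Moreover, if √δ·r ≤ d(q̂₁⁺, q̂₁⁻)/100, then the triple [Φ(0, q̂₁⁺), Φ(0, q̂₁⁻), Φ(0, q̂₀)] has excess at most 16√δ·r and scale at least ¼d(q̂₁⁺, q̂₁⁻). -/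
open Metric

set_option maxHeartbeats 1000000

/-- The point `(v, a)` of the product `ℝᵏ × X`, equipped with the `L²` (Pythagorean)
product metric `d((s,a),(t,b)) = √(|s−t|² + d(a,b)²)`. -/
noncomputable def prodPoint (k : ℕ) {X : Type*} (v : EuclideanSpace ℝ (Fin k)) (a : X) :
    WithLp 2 (EuclideanSpace ℝ (Fin k) × X) :=
  (WithLp.equiv 2 (EuclideanSpace ℝ (Fin k) × X)).symm (v, a)

/-- An `ε`-Gromov–Hausdorff approximation from the set `s ⊆ X` to the set `t ⊆ Y`:
it maps `s` into `t`, preserves distances up to an error `< ε`, and its image is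
`ε`-dense in `t`. -/
def IsGHApproxOn {X Y : Type*} [PseudoMetricSpace X] [PseudoMetricSpace Y]
    (ε : ℝ) (f : X → Y) (s : Set X) (t : Set Y) : Prop :=
  (∀ x ∈ s, f x ∈ t) ∧
  (∀ x₁ ∈ s, ∀ x₂ ∈ s, |dist (f x₁) (f x₂) - dist x₁ x₂| < ε) ∧
  (∀ y ∈ t, ∃ x ∈ s, dist (f x) y ≤ ε)

private lemma distL2' {A X : Type*} [PseudoMetricSpace A] [PseudoMetricSpace X]
    (x y : WithLp 2 (A × X)) :
    dist x y = Real.sqrt (dist x.fst y.fst ^ 2 + dist x.snd y.snd ^ 2) := by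
  rw [WithLp.prod_dist_eq_add (p := 2) (by norm_num), Real.sqrt_eq_rpow]
  norm_num

private lemma distL2_snd_le' {A X : Type*} [PseudoMetricSpace A] [PseudoMetricSpace X]
    (x y : WithLp 2 (A × X)) : dist x.snd y.snd ≤ dist x y := by
  rw [distL2']
  calc dist x.snd y.snd = Real.sqrt (dist x.snd y.snd ^ 2) := (Real.sqrt_sq dist_nonneg).symm
    _ ≤ _ := Real.sqrt_le_sqrt (by nlinarith [sq_nonneg (dist x.fst y.fst)])

private lemma dist_prodPoint_zero {k : ℕ} {X : Type*} [MetricSpace X] (a b : X) :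
    dist (prodPoint k 0 a) (prodPoint k 0 b) = dist a b := by
  rw [distL2']
  have : dist (prodPoint k 0 a).fst (prodPoint k 0 b).fst = 0 := by
    simp [prodPoint]
  rw [this]
  have : dist (prodPoint k 0 a).snd (prodPoint k 0 b).snd = dist a b := rfl
  rw [this]
  simpa using Real.sqrt_sq (dist_nonneg (x := a) (y := b))

private lemma dist_snd_prodPoint_le {k : ℕ} {X : Type*} [MetricSpace X]
    (z : WithLp 2 (EuclideanSpace ℝ (Fin k) × X)) (a : X) :
    dist z.snd a ≤ dist z (prodPoint k 0 a) := by
  have h := distL2_snd_le' z (prodPoint k 0 a)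
  have : (prodPoint k 0 a).snd = a := rfl
  rwa [this] at h

/-- Existence of almost middle points from a Gromov–Hausdorff
approximation: let `0 ≤ k ≤ n`, `0 < δ < 1/3`, and let
`Φ : B_{10r}(0, q̂) → B_{10r}(q)` be a pointed `(δr)`-GH approximation, where
`B_{10r}(0, q̂) ⊆ ℝᵏ × X` and `B_{10r}(q)` is a geodesic ball in a complete geodesic
space (Riemannian manifold) `M`.  Then for any `q̂₁⁺, q̂₁⁻ ∈ B_r(q̂) ⊆ X` there is
`q̂₀ ∈ B_{3r}(q̂)` with
`|d(q̂₀, q̂₁^±) − ½ d(q̂₁⁺, q̂₁⁻)| ≤ 8√δ r`; moreover if `√δ r ≤ d(q̂₁⁺, q̂₁⁻)/100`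
then the triple `[Φ(0,q̂₁⁺), Φ(0,q̂₁⁻), Φ(0,q̂₀)]` has excess `≤ 16√δ r` and scale
`≥ ¼ d(q̂₁⁺, q̂₁⁻)`. -/
theorem exists_almost_midpoint {X : Type*} [MetricSpace X]
    {M : Type*} [MetricSpace M] [CompleteSpace M]
    (hgeo : ∀ a b : M, ∃ m : M, dist a m = dist a b / 2 ∧ dist m b = dist a b / 2)
    (k n : ℕ) (hk : k ≤ n) (hn : 3 ≤ n)
    (δ r : ℝ) (hδ0 : 0 < δ) (hδ : δ < 1 / 3) (hr : 0 < r)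
    (qhat : X) (q : M)
    (Φ : WithLp 2 (EuclideanSpace ℝ (Fin k) × X) → M)
    (hΦ0 : Φ (prodPoint k 0 qhat) = q)
    (hΦ : IsGHApproxOn (δ * r) Φ
      (Metric.ball (prodPoint k 0 qhat) (10 * r)) (Metric.ball q (10 * r)))
    (q1p q1m : X) (h1p : q1p ∈ Metric.ball qhat r) (h1m : q1m ∈ Metric.ball qhat r) :
    ∃ q0 ∈ Metric.ball qhat (3 * r),
      |dist q0 q1p - dist q1p q1m / 2| ≤ 8 * Real.sqrt δ * r ∧
      |dist q0 q1m - dist q1p q1m / 2| ≤ 8 * Real.sqrt δ * r ∧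
      (Real.sqrt δ * r ≤ dist q1p q1m / 100 →
        dist (Φ (prodPoint k 0 q0)) (Φ (prodPoint k 0 q1p)) +
            dist (Φ (prodPoint k 0 q0)) (Φ (prodPoint k 0 q1m)) -
            dist (Φ (prodPoint k 0 q1p)) (Φ (prodPoint k 0 q1m)) ≤
          16 * Real.sqrt δ * r ∧
        dist q1p q1m / 4 ≤
          min (dist (Φ (prodPoint k 0 q0)) (Φ (prodPoint k 0 q1p)))
            (dist (Φ (prodPoint k 0 q0)) (Φ (prodPoint k 0 q1m)))) := by
  obtain ⟨hmap, hdist, hdense⟩ := hΦ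
  have hδ1 : δ ≤ 1 := by linarith
  have hsδ : Real.sqrt δ * Real.sqrt δ = δ := Real.mul_self_sqrt hδ0.le
  have hsδ0 : 0 ≤ Real.sqrt δ := Real.sqrt_nonneg δ
  have hsδ1 : Real.sqrt δ ≤ 1 := by nlinarith
  have hδsδ : δ ≤ Real.sqrt δ := by nlinarith
  have hδr : 0 < δ * r := by positivity
  have hδr3 : δ * r < 1 / 3 * r := by nlinarith
  have key : 5 / 2 * (δ * r) ≤ 8 * Real.sqrt δ * r := by nlinarith
  have key2 : 8 * (δ * r) ≤ 16 * Real.sqrt δ * r := by nlinarith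
  rw [mem_ball] at h1p h1m
  set d := dist q1p q1m with hd
  have hd0 : 0 ≤ d := dist_nonneg
  have hd2r : d < 2 * r := by
    calc d ≤ dist q1p qhat + dist qhat q1m := dist_triangle _ _ _
      _ < r + r := by rw [dist_comm qhat q1m]; exact add_lt_add h1p h1m
      _ = 2 * r := by ring
  set O := prodPoint k 0 qhat with hO
  set P := prodPoint k 0 q1p with hP
  set Q := prodPoint k 0 q1m with hQ
  have hPO : dist P O = dist q1p qhat := dist_prodPoint_zero _ _
  have hQO : dist Q O = dist q1m qhat := dist_prodPoint_zero _ _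
  have hPQ : dist P Q = d := dist_prodPoint_zero _ _
  have hPball : P ∈ Metric.ball O (10 * r) := by rw [mem_ball, hPO]; linarith
  have hQball : Q ∈ Metric.ball O (10 * r) := by rw [mem_ball, hQO]; linarith
  have hOball : O ∈ Metric.ball O (10 * r) := mem_ball_self (by linarith)
  have hΦPq : dist (Φ P) q < r + δ * r := by
    have h := (abs_lt.mp (hdist P hPball O hOball)).2
    rw [hΦ0, hPO] at h
    linarith
  have hDPQ : |dist (Φ P) (Φ Q) - d| < δ * r := by
    have h := hdist P hPball Q hQball
    rwa [hPQ] at h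
  have hDPQ' := abs_lt.mp hDPQ
  have hDPQnn : 0 ≤ dist (Φ P) (Φ Q) := dist_nonneg
  obtain ⟨m, hm1, hm2⟩ := hgeo (Φ P) (Φ Q)
  have hmball : m ∈ Metric.ball q (10 * r) := by
    rw [mem_ball]
    calc dist m q ≤ dist m (Φ P) + dist (Φ P) q := dist_triangle _ _ _
      _ = dist (Φ P) (Φ Q) / 2 + dist (Φ P) q := by rw [dist_comm m (Φ P), hm1]
      _ < 10 * r := by nlinarith [hDPQ'.2]
  obtain ⟨z, hzball, hzm⟩ := hdense m hmball
  set q0 := z.snd with hq0def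
  -- upper bounds on dist z P and dist z Q
  have hzP : dist z P < d / 2 + 5 / 2 * (δ * r) := by
    have h := (abs_lt.mp (hdist z hzball P hPball)).1
    have hch : dist (Φ z) (Φ P) ≤ dist (Φ z) m + dist m (Φ P) := dist_triangle _ _ _
    rw [dist_comm m (Φ P), hm1] at hch
    linarith [hDPQ'.2]
  have hzQ : dist z Q < d / 2 + 5 / 2 * (δ * r) := by
    have h := (abs_lt.mp (hdist z hzball Q hQball)).1
    have hch : dist (Φ z) (Φ Q) ≤ dist (Φ z) m + dist m (Φ Q) := dist_triangle _ _ _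
    rw [hm2] at hch
    linarith [hDPQ'.2]
  have hq0p_ub : dist q0 q1p < d / 2 + 5 / 2 * (δ * r) :=
    lt_of_le_of_lt (dist_snd_prodPoint_le z q1p) hzP
  have hq0m_ub : dist q0 q1m < d / 2 + 5 / 2 * (δ * r) :=
    lt_of_le_of_lt (dist_snd_prodPoint_le z q1m) hzQ
  have htri : d ≤ dist q1p q0 + dist q0 q1m := dist_triangle _ _ _
  have hcp : dist q1p q0 = dist q0 q1p := dist_comm _ _
  have hq0p_lb : d / 2 - 5 / 2 * (δ * r) < dist q0 q1p := by linarith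
  have hq0m_lb : d / 2 - 5 / 2 * (δ * r) < dist q0 q1m := by linarith
  have hball : q0 ∈ Metric.ball qhat (3 * r) := by
    rw [mem_ball]
    calc dist q0 qhat ≤ dist q0 q1p + dist q1p qhat := dist_triangle _ _ _
      _ < (d / 2 + 5 / 2 * (δ * r)) + r := add_lt_add hq0p_ub h1p
      _ < 3 * r := by linarith
  refine ⟨q0, hball, ?_, ?_, ?_⟩
  · rw [abs_le]
    exact ⟨by linarith, by linarith⟩
  · rw [abs_le]
    exact ⟨by linarith, by linarith⟩
  · intro hsmall
    set Q0 := prodPoint k 0 q0 with hQ0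
    have hQ0O : dist Q0 O = dist q0 qhat := dist_prodPoint_zero _ _
    have hQ0ball : Q0 ∈ Metric.ball O (10 * r) := by
      rw [mem_ball, hQ0O]
      rw [mem_ball] at hball
      linarith
    have hAp := abs_lt.mp (hdist Q0 hQ0ball P hPball)
    rw [dist_prodPoint_zero q0 q1p] at hAp
    have hAm := abs_lt.mp (hdist Q0 hQ0ball Q hQball)
    rw [dist_prodPoint_zero q0 q1m] at hAm
    have hδrd : δ * r ≤ d / 100 := by nlinarith
    constructor
    · linarith [hAp.2, hAm.2, hDPQ'.1]
    · refine le_min ?_ ?_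
      · linarith [hAp.1]
      · linarith [hAm.1]
end
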